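/- If every basis element B_j satisfies [H, B_j] = 0 for the Hamiltonian H, then the projection operation 𝔒 commutes with unitary time evolution 𝔗_t(ρ) = e^{-iHt} ρ e^{iHt}: 𝔒(𝔗_t(ρ)) = 𝔗_t(𝔒(ρ)) for all t and all density matrices ρ. -/

import Mathlib

open Matrix
open scoped ComplexOrder

/-- If every `B_j` commutes with `H`, then the projection `𝔒` commutes with
unitary time evolution `𝔗_t(ρ) = e^{-itH} ρ e^{itH}`. -/
theorem projection_commutes_with_evolution
    {n r : ℕ} (H : Matrix (Fin n) (Fin n) ℂ) (hH : H.IsHermitian)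
    (B : Fin r → Matrix (Fin n) (Fin n) ℂ)
    (hherm : ∀ j, (B j).IsHermitian)
    (htraceless : ∀ j, (B j).trace = 0)
    (hnonzero : ∀ j, B j ≠ 0)
    (horth : ∀ i j, i ≠ j → ((B i)ᴴ * B j).trace = 0)
    (hcomm : ∀ j, H * B j = B j * H)
    (𝔒 : Matrix (Fin n) (Fin n) ℂ → Matrix (Fin n) (Fin n) ℂ)
    (h𝔒 : ∀ ρ, 𝔒 ρ = ((1 : ℂ)/n) • (1 : Matrix (Fin n) (Fin n) ℂ) +
      ∑ j, (((B j) * ρ).trace / ((B j) * (B j)).trace) • B j)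
    (𝔗 : ℝ → Matrix (Fin n) (Fin n) ℂ → Matrix (Fin n) (Fin n) ℂ)
    (h𝔗 : ∀ t ρ, 𝔗 t ρ =
      NormedSpace.exp ((-(Complex.I * t)) • H) * ρ * NormedSpace.exp ((Complex.I * t) • H)) :
    ∀ (t : ℝ) (ρ : Matrix (Fin n) (Fin n) ℂ), ρ.PosSemidef → ρ.trace = 1 →
      𝔒 (𝔗 t ρ) = 𝔗 t (𝔒 ρ) := by
  intro t ρ _ _
  set U := NormedSpace.exp ((-(Complex.I * t)) • H) with hUdef
  set V := NormedSpace.exp ((Complex.I * t) • H) with hVdef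
  have hcUV : Commute ((-(Complex.I * t)) • H) ((Complex.I * t) • H) :=
    ((Commute.refl H).smul_left _).smul_right _
  have hUV : U * V = 1 := by
    rw [hUdef, hVdef, ← Matrix.exp_add_of_commute _ _ hcUV]
    simp
  have hVU : V * U = 1 := by
    rw [hUdef, hVdef, ← Matrix.exp_add_of_commute _ _ hcUV.symm]
    simp
  have hcommB : ∀ j, U * B j = B j * U := by
    intro j
    letI : SeminormedRing (Matrix (Fin n) (Fin n) ℂ) := Matrix.linftyOpSemiNormedRing
    letI : NormedRing (Matrix (Fin n) (Fin n) ℂ) := Matrix.linftyOpNormedRing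
    letI : NormedAlgebra ℂ (Matrix (Fin n) (Fin n) ℂ) := Matrix.linftyOpNormedAlgebra
    have hc : Commute H (B j) := hcomm j
    exact ((hc.smul_left (-(Complex.I * t))).exp_left)
  have htr : ∀ j, (B j * (U * ρ * V)).trace = (B j * ρ).trace := by
    intro j
    have h1 : B j * (U * ρ * V) = U * (B j * ρ) * V := by
      rw [show B j * (U * ρ * V) = (B j * U) * ρ * V by noncomm_ring,
        ← hcommB j]
      noncomm_ring
    rw [h1, trace_mul_cycle, ← mul_assoc, hVU, one_mul]
  rw [h𝔒, h𝔒, h𝔗, h𝔗]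
  have hRHS : U * (((1 : ℂ)/n) • (1 : Matrix (Fin n) (Fin n) ℂ) +
      ∑ j, (((B j) * ρ).trace / ((B j) * (B j)).trace) • B j) * V =
      ((1 : ℂ)/n) • (1 : Matrix (Fin n) (Fin n) ℂ) +
      ∑ j, (((B j) * ρ).trace / ((B j) * (B j)).trace) • B j := by
    rw [mul_add, add_mul, Finset.mul_sum, Finset.sum_mul]
    congr 1
    · rw [mul_smul_comm, smul_mul_assoc, mul_one, hUV]
    · refine Finset.sum_congr rfl fun j _ => ?_
      rw [mul_smul_comm, smul_mul_assoc, hcommB j, mul_assoc, hUV, mul_one]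
  rw [hRHS]
  congr 1
  exact Finset.sum_congr rfl fun j _ => by rw [htr]
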